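/- arXiv:2604.27268 — 8 statements merged into one kernel-verified Lean document; each statement's English description precedes it below -/
import Mathlib

section
/- Every prechart homomorphism f : (Q, β) → (R, γ) is an isometry with respect to the behavioural distances: for all x, y ∈ Q, bd_γ(f(x), f(y)) = bd_β(x, y). -/
open Classical in
/-- The lifting `d↑` of a distance function on `X` to `Σ × X + V`. -/
noncomputable def distLift {A V X : Type*} (d : X → X → ℝ) :
    ((A × X) ⊕ V) → ((A × X) ⊕ V) → ℝ
  | Sum.inl (a, x), Sum.inl (b, y) => if a = b then (1 / 2) * d x y else 1
  | Sum.inr v, Sum.inr w => if v = w then 0 else 1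
  | _, _ => 1

/-- Supremum of `f` over a finite set, with the convention `sup ∅ = 0`. -/
noncomputable def hSup {Y : Type*} (s : Finset Y) (f : Y → ℝ) : ℝ :=
  if h : s.Nonempty then s.sup' h f else 0

/-- Infimum of `f` over a finite set, with the convention `inf ∅ = 1`. -/
noncomputable def hInf {Y : Type*} (s : Finset Y) (f : Y → ℝ) : ℝ :=
  if h : s.Nonempty then s.inf' h f else 1

/-- Hausdorff lifting of a distance function to finite subsets. -/
noncomputable def hausdorffDist {X : Type*} (d : X → X → ℝ) (s t : Finset X) : ℝ :=
  max (hSup s fun x => hInf t fun y => d x y) (hSup t fun y => hInf s fun x => d y x)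

/-- The map `Φ_β` associated with a prechart `(Q, β)`. -/
noncomputable def Phi {A V Q : Type*} (β : Q → Finset ((A × Q) ⊕ V))
    (d : Q → Q → ℝ) : Q → Q → ℝ :=
  fun q₁ q₂ => hausdorffDist (distLift d) (β q₁) (β q₂)

/-- `d` is a 1-bounded pseudometric on `X`. -/
structure IsBPMet {X : Type*} (d : X → X → ℝ) : Prop where
  nonneg : ∀ x y, 0 ≤ d x y
  le_one : ∀ x y, d x y ≤ 1
  refl : ∀ x, d x x = 0
  symm : ∀ x y, d x y = d y x
  triangle : ∀ x y z, d x z ≤ d x y + d y z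

/-- A bisimulation between two precharts. -/
def IsBisim {A V Q₁ Q₂ : Type*} (β₁ : Q₁ → Finset ((A × Q₁) ⊕ V))
    (β₂ : Q₂ → Finset ((A × Q₂) ⊕ V)) (R : Q₁ → Q₂ → Prop) : Prop :=
  ∀ q₁ q₂, R q₁ q₂ →
    (∀ v : V, Sum.inr v ∈ β₁ q₁ ↔ Sum.inr v ∈ β₂ q₂) ∧
    (∀ (a : A) (q₁' : Q₁), Sum.inl (a, q₁') ∈ β₁ q₁ →
      ∃ q₂', Sum.inl (a, q₂') ∈ β₂ q₂ ∧ R q₁' q₂') ∧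
    (∀ (a : A) (q₂' : Q₂), Sum.inl (a, q₂') ∈ β₂ q₂ →
      ∃ q₁', Sum.inl (a, q₁') ∈ β₁ q₁ ∧ R q₁' q₂')

/-- Bisimilarity of two states of a prechart. -/
def Bisimilar {A V Q : Type*} (β : Q → Finset ((A × Q) ⊕ V)) (q₁ q₂ : Q) : Prop :=
  ∃ R, IsBisim β β R ∧ R q₁ q₂

/-- A prechart homomorphism: a function whose graph is a bisimulation. -/
def IsHom {A V Q₁ Q₂ : Type*} (β₁ : Q₁ → Finset ((A × Q₁) ⊕ V))
    (β₂ : Q₂ → Finset ((A × Q₂) ⊕ V)) (f : Q₁ → Q₂) : Prop :=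
  IsBisim β₁ β₂ fun q₁ q₂ => q₂ = f q₁

/-- Stratification of bisimilarity between two precharts. -/
def Strat2 {A V Q₁ Q₂ : Type*} (β₁ : Q₁ → Finset ((A × Q₁) ⊕ V))
    (β₂ : Q₂ → Finset ((A × Q₂) ⊕ V)) : ℕ → Q₁ → Q₂ → Prop
  | 0 => fun _ _ => True
  | n + 1 => fun q₁ q₂ =>
      (∀ v : V, Sum.inr v ∈ β₁ q₁ ↔ Sum.inr v ∈ β₂ q₂) ∧
      (∀ (a : A) (q₁' : Q₁), Sum.inl (a, q₁') ∈ β₁ q₁ →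
        ∃ q₂', Sum.inl (a, q₂') ∈ β₂ q₂ ∧ Strat2 β₁ β₂ n q₁' q₂') ∧
      (∀ (a : A) (q₂' : Q₂), Sum.inl (a, q₂') ∈ β₂ q₂ →
        ∃ q₁', Sum.inl (a, q₁') ∈ β₁ q₁ ∧ Strat2 β₁ β₂ n q₁' q₂')

/-- Stratification of bisimilarity on a single prechart. -/
def Strat {A V Q : Type*} (β : Q → Finset ((A × Q) ⊕ V)) : ℕ → Q → Q → Prop :=
  Strat2 β β

/-- One-step transition relation of a prechart. -/
def StepRel {A V Q : Type*} (β : Q → Finset ((A × Q) ⊕ V)) (q q' : Q) : Prop :=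
  ∃ a : A, Sum.inl (a, q') ∈ β q

/-- A prechart is locally finite if every state reaches only finitely many states. -/
def LocFinite {A V Q : Type*} (β : Q → Finset ((A × Q) ⊕ V)) : Prop :=
  ∀ q : Q, {q' | Relation.ReflTransGen (StepRel β) q q'}.Finite

/-- `bd` is the least fixpoint of `Φ_β` in the lattice of 1-bounded pseudometrics. -/
def IsLfpDist {A V Q : Type*} (β : Q → Finset ((A × Q) ⊕ V)) (bd : Q → Q → ℝ) : Prop :=
  IsBPMet bd ∧ Phi β bd = bd ∧
    ∀ d : Q → Q → ℝ, IsBPMet d → Phi β d = d → ∀ x y, bd x y ≤ d x y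

open Classical in
/-- The discrete pseudometric, the top element of `D_X`. -/
noncomputable def discreteDist {X : Type*} : X → X → ℝ :=
  fun x y => if x = y then 0 else 1

/-- Iterates `Φ_β^{(p)}` of `Φ_β` starting from the discrete pseudometric. -/
noncomputable def PhiIter {A V Q : Type*} (β : Q → Finset ((A × Q) ⊕ V)) :
    ℕ → Q → Q → ℝ
  | 0 => discreteDist
  | n + 1 => Phi β (PhiIter β n)


namespace HomIsoAux

open Filter Topology

variable {A V Q R Y : Type*}

/-! ### Basic facts about `hSup` and `hInf` -/

lemma hSup_le {s : Finset Y} {f : Y → ℝ} {c : ℝ} (hc : 0 ≤ c) (h : ∀ x ∈ s, f x ≤ c) :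
    hSup s f ≤ c := by
  unfold hSup; split
  · exact Finset.sup'_le _ _ h
  · exact hc

lemma le_hSup {s : Finset Y} {f : Y → ℝ} {x : Y} (hx : x ∈ s) : f x ≤ hSup s f := by
  unfold hSup; rw [dif_pos ⟨x, hx⟩]; exact Finset.le_sup' f hx

lemma hSup_nonneg {s : Finset Y} {f : Y → ℝ} (h : ∀ x ∈ s, 0 ≤ f x) : 0 ≤ hSup s f := by
  unfold hSup; split
  · next hne => exact le_trans (h _ hne.choose_spec) (Finset.le_sup' f hne.choose_spec)
  · exact le_refl 0

lemma hInf_le {s : Finset Y} {f : Y → ℝ} {x : Y} (hx : x ∈ s) : hInf s f ≤ f x := by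
  unfold hInf; rw [dif_pos ⟨x, hx⟩]; exact Finset.inf'_le f hx

lemma le_hInf {s : Finset Y} {f : Y → ℝ} {c : ℝ} (hc : c ≤ 1) (h : ∀ x ∈ s, c ≤ f x) :
    c ≤ hInf s f := by
  unfold hInf; split
  · exact Finset.le_inf' _ _ h
  · exact hc

lemma hInf_le_one {s : Finset Y} {f : Y → ℝ} (h : ∀ x ∈ s, f x ≤ 1) : hInf s f ≤ 1 := by
  unfold hInf; split
  · next hne => exact le_trans (Finset.inf'_le f hne.choose_spec) (h _ hne.choose_spec)
  · exact le_refl 1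

lemma hSup_mono_fun {s : Finset Y} {f g : Y → ℝ} (h : ∀ x ∈ s, f x ≤ g x) :
    hSup s f ≤ hSup s g := by
  unfold hSup; split
  · exact Finset.sup'_mono_fun h
  · exact le_refl 0

lemma hInf_mono_fun {s : Finset Y} {f g : Y → ℝ} (h : ∀ x ∈ s, f x ≤ g x) :
    hInf s f ≤ hInf s g := by
  unfold hInf; split
  · next hne => exact Finset.le_inf' hne _ fun x hx => le_trans (Finset.inf'_le f hx) (h x hx)
  · exact le_refl 1

lemma hSup_empty (f : Y → ℝ) : hSup (∅ : Finset Y) f = 0 := by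
  unfold hSup; rw [dif_neg]; simp

lemma hInf_empty (f : Y → ℝ) : hInf (∅ : Finset Y) f = 1 := by
  unfold hInf; rw [dif_neg]; simp

lemma hInf_eq {s : Finset Y} (hs : s.Nonempty) (f : Y → ℝ) : hInf s f = s.inf' hs f := by
  unfold hInf; rw [dif_pos hs]

lemma hSup_const_one {s : Finset Y} (hs : s.Nonempty) : hSup s (fun _ => (1:ℝ)) = 1 := by
  unfold hSup; rw [dif_pos hs, Finset.sup'_const]

lemma hSup_image {Z : Type*} [DecidableEq Z] {s : Finset Y} (g : Y → Z) (F : Z → ℝ) :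
    hSup (s.image g) F = hSup s (fun y => F (g y)) := by
  unfold hSup
  by_cases h : s.Nonempty
  · rw [dif_pos (h.image g), dif_pos h, Finset.sup'_image]
    rfl
  · rw [dif_neg (by simpa [Finset.image_nonempty] using h), dif_neg h]

lemma hInf_image {Z : Type*} [DecidableEq Z] {s : Finset Y} (g : Y → Z) (F : Z → ℝ) :
    hInf (s.image g) F = hInf s (fun y => F (g y)) := by
  unfold hInf
  by_cases h : s.Nonempty
  · rw [dif_pos (h.image g), dif_pos h, Finset.inf'_image]
    rfl
  · rw [dif_neg (by simpa [Finset.image_nonempty] using h), dif_neg h]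

/-! ### Tendsto lemmas -/

lemma tendsto_sup' {s : Finset Y} (hs : s.Nonempty) {F : ℕ → Y → ℝ} {f : Y → ℝ}
    (h : ∀ x ∈ s, Tendsto (fun n => F n x) atTop (𝓝 (f x))) :
    Tendsto (fun n => s.sup' hs (F n)) atTop (𝓝 (s.sup' hs f)) := by
  induction hs using Finset.Nonempty.cons_induction with
  | singleton a => simpa using h a (by simp)
  | cons a t ha ht ih =>
    have e1 : ∀ g : Y → ℝ, (Finset.cons a t ha).sup' (Finset.cons_nonempty ha) g
        = max (g a) (t.sup' ht g) := fun g => Finset.sup'_cons (H := ht) g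
    simp only [e1]
    exact (h a (by simp)).max (ih fun x hx => h x (Finset.mem_cons_of_mem hx))

lemma tendsto_inf' {s : Finset Y} (hs : s.Nonempty) {F : ℕ → Y → ℝ} {f : Y → ℝ}
    (h : ∀ x ∈ s, Tendsto (fun n => F n x) atTop (𝓝 (f x))) :
    Tendsto (fun n => s.inf' hs (F n)) atTop (𝓝 (s.inf' hs f)) := by
  induction hs using Finset.Nonempty.cons_induction with
  | singleton a => simpa using h a (by simp)
  | cons a t ha ht ih =>
    have e1 : ∀ g : Y → ℝ, (Finset.cons a t ha).inf' (Finset.cons_nonempty ha) g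
        = min (g a) (t.inf' ht g) := fun g => Finset.inf'_cons (H := ht) g
    simp only [e1]
    exact (h a (by simp)).min (ih fun x hx => h x (Finset.mem_cons_of_mem hx))

lemma tendsto_hSup {s : Finset Y} {F : ℕ → Y → ℝ} {f : Y → ℝ}
    (h : ∀ x ∈ s, Tendsto (fun n => F n x) atTop (𝓝 (f x))) :
    Tendsto (fun n => hSup s (F n)) atTop (𝓝 (hSup s f)) := by
  unfold hSup
  by_cases hs : s.Nonempty
  · simp only [dif_pos hs]; exact tendsto_sup' hs h
  · simp only [dif_neg hs]; exact tendsto_const_nhds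

lemma tendsto_hInf {s : Finset Y} {F : ℕ → Y → ℝ} {f : Y → ℝ}
    (h : ∀ x ∈ s, Tendsto (fun n => F n x) atTop (𝓝 (f x))) :
    Tendsto (fun n => hInf s (F n)) atTop (𝓝 (hInf s f)) := by
  unfold hInf
  by_cases hs : s.Nonempty
  · simp only [dif_pos hs]; exact tendsto_inf' hs h
  · simp only [dif_neg hs]; exact tendsto_const_nhds

/-! ### distLift lemmas -/

variable {X : Type*}

lemma distLift_nonneg {d : X → X → ℝ} (hd : ∀ x y, 0 ≤ d x y) :
    ∀ m n, 0 ≤ distLift (A := A) (V := V) d m n := by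
  rintro (⟨a, x⟩ | v) (⟨b, y⟩ | w) <;> simp only [distLift] <;> norm_num
  · split_ifs <;> [linarith [hd x y]; norm_num]
  · split_ifs <;> norm_num

lemma distLift_le_one {d : X → X → ℝ} (hd : ∀ x y, d x y ≤ 1) :
    ∀ m n, distLift (A := A) (V := V) d m n ≤ 1 := by
  rintro (⟨a, x⟩ | v) (⟨b, y⟩ | w) <;> simp only [distLift] <;> norm_num
  · split_ifs <;> [linarith [hd x y]; norm_num]
  · split_ifs <;> norm_num

lemma distLift_self {d : X → X → ℝ} (hd : ∀ x, d x x = 0) :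
    ∀ m, distLift (A := A) (V := V) d m m = 0 := by
  rintro (⟨a, x⟩ | v) <;> simp [distLift, hd]

lemma distLift_mono {d d' : X → X → ℝ} (h : ∀ x y, d x y ≤ d' x y) :
    ∀ m n, distLift (A := A) (V := V) d m n ≤ distLift d' m n := by
  rintro (⟨a, x⟩ | v) (⟨b, y⟩ | w) <;> simp only [distLift] <;> try norm_num
  · split_ifs <;> [linarith [h x y]; norm_num]

lemma distLift_triangle {d : X → X → ℝ} (h0 : ∀ x y, 0 ≤ d x y) (h1 : ∀ x y, d x y ≤ 1)
    (ht : ∀ x y z, d x z ≤ d x y + d y z) :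
    ∀ m n p, distLift (A := A) (V := V) d m p ≤ distLift d m n + distLift d n p := by
  rintro (⟨a, x⟩ | v) (⟨b, y⟩ | w) (⟨c, z⟩ | u) <;>
    simp only [distLift] <;> split_ifs <;> subst_vars <;>
      first
        | (exact absurd rfl (by assumption))
        | linarith [ht x y z, h0 x y, h0 y z, h0 x z, h1 x z]
        | linarith [h0 x y, h0 y z, h0 x z, h1 x z, h1 x y, h1 y z]
        | linarith [h0 x z, h1 x z]
        | linarith [h0 y z, h1 y z]
        | linarith [h0 x y, h1 x y]
        | norm_num
        | simp_all

/-! ### Directed Hausdorff distance -/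

noncomputable def dd (e : X → X → ℝ) (s t : Finset X) : ℝ :=
  hSup s fun x => hInf t fun y => e x y

lemma dd_nonneg {e : X → X → ℝ} (h0 : ∀ m n, 0 ≤ e m n) (s t : Finset X) : 0 ≤ dd e s t :=
  hSup_nonneg fun x _ => le_hInf zero_le_one fun y _ => h0 x y

lemma dd_le_one {e : X → X → ℝ} (h1 : ∀ m n, e m n ≤ 1) (s t : Finset X) : dd e s t ≤ 1 :=
  hSup_le zero_le_one fun x _ => hInf_le_one fun y _ => h1 x y

lemma dd_triangle {e : X → X → ℝ} (h0 : ∀ m n, 0 ≤ e m n) (h1 : ∀ m n, e m n ≤ 1)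
    (ht : ∀ m n p, e m p ≤ e m n + e n p) (s t u : Finset X) :
    dd e s u ≤ dd e s t + dd e t u := by
  have ddnn := dd_nonneg (e := e) h0
  rcases s.eq_empty_or_nonempty with rfl | hs
  · unfold dd
    rw [hSup_empty]
    exact add_nonneg (ddnn _ _) (ddnn _ _)
  rcases t.eq_empty_or_nonempty with rfl | htne
  · have e1 : dd e s (∅ : Finset X) = 1 := by
      unfold dd
      rw [show (fun x => hInf (∅ : Finset X) fun y => e x y) = fun _ => (1:ℝ) from
        funext fun x => hInf_empty _, hSup_const_one hs]
    have e2 : dd e s u ≤ 1 := dd_le_one h1 s u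
    rw [e1]
    linarith [ddnn (∅ : Finset X) u]
  apply hSup_le (add_nonneg (ddnn _ _) (ddnn _ _))
  intro x hx
  obtain ⟨y, hy, hxy⟩ := Finset.exists_mem_eq_inf' htne (fun y => e x y)
  have exy : e x y ≤ dd e s t := by
    have : hInf t (fun y => e x y) = e x y := by rw [hInf_eq htne]; exact hxy
    calc e x y = hInf t (fun y => e x y) := this.symm
      _ ≤ dd e s t := le_hSup (f := fun x => hInf t fun y => e x y) hx
  rcases u.eq_empty_or_nonempty with rfl | hu
  · rw [hInf_empty]
    have : dd e t (∅ : Finset X) = 1 := by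
      unfold dd
      rw [show (fun m => hInf (∅ : Finset X) fun n => e m n) = fun _ => (1:ℝ) from
        funext fun m => hInf_empty _, hSup_const_one htne]
    rw [this]
    linarith [ddnn s t]
  · obtain ⟨z, hz, hyz⟩ := Finset.exists_mem_eq_inf' hu (fun z => e y z)
    have eyz : e y z ≤ dd e t u := by
      have : hInf u (fun z => e y z) = e y z := by rw [hInf_eq hu]; exact hyz
      calc e y z = hInf u (fun z => e y z) := this.symm
        _ ≤ dd e t u := le_hSup (f := fun m => hInf u fun n => e m n) hy
    calc hInf u (fun z => e x z) ≤ e x z := hInf_le hz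
      _ ≤ e x y + e y z := ht x y z
      _ ≤ dd e s t + dd e t u := add_le_add exy eyz

lemma dd_mono_fun {e e' : X → X → ℝ} (h : ∀ m n, e m n ≤ e' m n) (s t : Finset X) :
    dd e s t ≤ dd e' s t :=
  hSup_mono_fun fun x _ => hInf_mono_fun fun y _ => h x y

lemma hausdorffDist_eq (e : X → X → ℝ) (s t : Finset X) :
    hausdorffDist e s t = max (dd e s t) (dd e t s) := rfl

/-! ### Properties of `Phi` -/

variable {β : Q → Finset ((A × Q) ⊕ V)}

lemma Phi_eq (d : Q → Q → ℝ) (x y : Q) :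
    Phi β d x y = max (dd (distLift d) (β x) (β y)) (dd (distLift d) (β y) (β x)) := rfl

lemma Phi_nonneg {d : Q → Q → ℝ} (h0 : ∀ x y, 0 ≤ d x y) (x y : Q) : 0 ≤ Phi β d x y := by
  rw [Phi_eq]
  exact le_max_of_le_left (dd_nonneg (distLift_nonneg h0) _ _)

lemma Phi_le_one {d : Q → Q → ℝ} (h1 : ∀ x y, d x y ≤ 1) (x y : Q) : Phi β d x y ≤ 1 := by
  rw [Phi_eq]
  exact max_le (dd_le_one (distLift_le_one h1) _ _) (dd_le_one (distLift_le_one h1) _ _)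

lemma Phi_refl {d : Q → Q → ℝ} (h0 : ∀ x y, 0 ≤ d x y) (hr : ∀ x, d x x = 0) (x : Q) :
    Phi β d x x = 0 := by
  have key : dd (distLift (A := A) (V := V) d) (β x) (β x) ≤ 0 :=
    hSup_le (le_refl 0) fun m hm => le_trans (hInf_le hm) (le_of_eq (distLift_self hr m))
  have key2 : 0 ≤ Phi β d x x := Phi_nonneg h0 x x
  rw [Phi_eq] at key2 ⊢
  exact le_antisymm (max_le key key) key2

lemma Phi_symm (d : Q → Q → ℝ) (x y : Q) : Phi β d x y = Phi β d y x := by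
  rw [Phi_eq, Phi_eq, max_comm]

lemma Phi_mono {d d' : Q → Q → ℝ} (h : ∀ x y, d x y ≤ d' x y) (x y : Q) :
    Phi β d x y ≤ Phi β d' x y := by
  rw [Phi_eq, Phi_eq]
  exact max_le_max (dd_mono_fun (distLift_mono h) _ _) (dd_mono_fun (distLift_mono h) _ _)

lemma Phi_triangle {d : Q → Q → ℝ} (hd : IsBPMet d) (x y z : Q) :
    Phi β d x z ≤ Phi β d x y + Phi β d y z := by
  have h0 := distLift_nonneg (A := A) (V := V) hd.nonneg
  have h1 := distLift_le_one (A := A) (V := V) hd.le_one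
  have ht := distLift_triangle (A := A) (V := V) hd.nonneg hd.le_one hd.triangle
  rw [Phi_eq, Phi_eq, Phi_eq]
  apply max_le
  · calc dd (distLift d) (β x) (β z) ≤ _ + _ := dd_triangle h0 h1 ht (β x) (β y) (β z)
      _ ≤ _ := add_le_add (le_max_left _ _) (le_max_left _ _)
  · calc dd (distLift d) (β z) (β x) ≤ _ + _ := dd_triangle h0 h1 ht (β z) (β y) (β x)
      _ ≤ max (dd (distLift d) (β y) (β z)) (dd (distLift d) (β z) (β y))
            + max (dd (distLift d) (β x) (β y)) (dd (distLift d) (β y) (β x)) :=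
        add_le_add (le_max_right _ _) (le_max_right _ _)
      _ = _ := add_comm _ _

lemma Phi_BPMet {d : Q → Q → ℝ} (hd : IsBPMet d) : IsBPMet (Phi β d) :=
  ⟨Phi_nonneg hd.nonneg, Phi_le_one hd.le_one, Phi_refl hd.nonneg hd.refl,
    Phi_symm d, Phi_triangle hd⟩

lemma tendsto_distLift {dn : ℕ → X → X → ℝ} {d : X → X → ℝ}
    (h : ∀ x y, Tendsto (fun n => dn n x y) atTop (𝓝 (d x y))) (m n : (A × X) ⊕ V) :
    Tendsto (fun k => distLift (A := A) (V := V) (dn k) m n) atTop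
      (𝓝 (distLift d m n)) := by
  rcases m with ⟨a, x⟩ | v <;> rcases n with ⟨b, y⟩ | w <;> simp only [distLift]
  · by_cases hab : a = b
    · simp only [if_pos hab]; exact (h x y).const_mul _
    · simp only [if_neg hab]; exact tendsto_const_nhds
  · exact tendsto_const_nhds
  · exact tendsto_const_nhds
  · by_cases hvw : v = w
    · simp only [if_pos hvw]; exact tendsto_const_nhds
    · simp only [if_neg hvw]; exact tendsto_const_nhds

lemma tendsto_Phi {dn : ℕ → Q → Q → ℝ} {d : Q → Q → ℝ}
    (h : ∀ x y, Tendsto (fun n => dn n x y) atTop (𝓝 (d x y))) (x y : Q) :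
    Tendsto (fun k => Phi β (dn k) x y) atTop (𝓝 (Phi β d x y)) := by
  have hdl := tendsto_distLift (A := A) (V := V) h
  simp only [Phi_eq]
  exact Tendsto.max
    (tendsto_hSup fun m _ => tendsto_hInf fun n _ => hdl m n)
    (tendsto_hSup fun m _ => tendsto_hInf fun n _ => hdl m n)

/-! ### Kleene iteration from the zero pseudometric -/

noncomputable def It0 (β : Q → Finset ((A × Q) ⊕ V)) : ℕ → Q → Q → ℝ
  | 0 => fun _ _ => 0
  | n + 1 => Phi β (It0 β n)

lemma zero_BPMet : IsBPMet (fun _ _ => (0 : ℝ) : Q → Q → ℝ) :=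
  ⟨fun _ _ => le_refl 0, fun _ _ => zero_le_one, fun _ => rfl, fun _ _ => rfl,
    fun _ _ _ => by norm_num⟩

lemma It0_BPMet : ∀ n, IsBPMet (It0 β n)
  | 0 => zero_BPMet
  | n + 1 => Phi_BPMet (It0_BPMet n)

lemma It0_mono : ∀ (n : ℕ) (x y : Q), It0 β n x y ≤ It0 β (n + 1) x y := by
  intro n
  induction n with
  | zero => exact fun x y => (It0_BPMet 1).nonneg x y
  | succ n ih => exact fun x y => Phi_mono ih x y

lemma It0_bdd (x y : Q) : BddAbove (Set.range fun n => It0 β n x y) :=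
  ⟨1, by rintro _ ⟨n, rfl⟩; exact (It0_BPMet n).le_one x y⟩

noncomputable def blim (β : Q → Finset ((A × Q) ⊕ V)) : Q → Q → ℝ :=
  fun x y => ⨆ n, It0 β n x y

lemma tendsto_blim (x y : Q) :
    Tendsto (fun n => It0 β n x y) atTop (𝓝 (blim β x y)) :=
  tendsto_atTop_ciSup (monotone_nat_of_le_succ fun n => It0_mono n x y) (It0_bdd x y)

lemma blim_fix : Phi β (blim β) = blim β := by
  funext x y
  have h1 : Tendsto (fun n => Phi β (It0 β n) x y) atTop (𝓝 (Phi β (blim β) x y)) :=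
    tendsto_Phi (fun a b => tendsto_blim a b) x y
  have h2 : Tendsto (fun n => It0 β (n + 1) x y) atTop (𝓝 (blim β x y)) :=
    (tendsto_blim x y).comp (tendsto_add_atTop_nat 1)
  exact tendsto_nhds_unique h1 h2

lemma blim_BPMet : IsBPMet (blim β) := by
  refine ⟨?_, ?_, ?_, ?_, ?_⟩
  · intro x y
    exact le_trans (le_refl 0) (le_ciSup (It0_bdd x y) 0)
  · intro x y
    exact ciSup_le fun n => (It0_BPMet n).le_one x y
  · intro x
    have : (fun n => It0 β n x x) = fun _ => (0 : ℝ) :=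
      funext fun n => (It0_BPMet n).refl x
    simp only [blim, this, ciSup_const]
  · intro x y
    have : (fun n => It0 β n x y) = fun n => It0 β n y x :=
      funext fun n => (It0_BPMet n).symm x y
    simp only [blim, this]
  · intro x y z
    refine ciSup_le fun n => le_trans ((It0_BPMet n).triangle x y z) ?_
    exact add_le_add (le_ciSup (It0_bdd x y) n) (le_ciSup (It0_bdd y z) n)

lemma eq_blim {bd : Q → Q → ℝ} (h : IsLfpDist β bd) : bd = blim β := by
  obtain ⟨hm, hfix, hmin⟩ := h
  have key : ∀ (n : ℕ) (x y : Q), It0 β n x y ≤ bd x y := by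
    intro n
    induction n with
    | zero => exact fun x y => hm.nonneg x y
    | succ n ih =>
      intro x y
      calc It0 β (n + 1) x y = Phi β (It0 β n) x y := rfl
        _ ≤ Phi β bd x y := Phi_mono ih x y
        _ = bd x y := by rw [hfix]
  funext x y
  exact le_antisymm (hmin (blim β) blim_BPMet blim_fix x y)
    (ciSup_le fun n => key n x y)

/-! ### Homomorphisms -/

variable {γ : R → Finset ((A × R) ⊕ V)} {f : Q → R}

def gmap (f : Q → R) : (A × Q) ⊕ V → (A × R) ⊕ V := Sum.map (Prod.map id f) id

lemma image_eq [DecidableEq ((A × R) ⊕ V)] (hf : IsHom β γ f) (x : Q) :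
    γ (f x) = (β x).image (gmap f) := by
  obtain ⟨h1, h2, h3⟩ := hf x (f x) rfl
  ext m
  simp only [Finset.mem_image]
  constructor
  · intro hm
    rcases m with ⟨a, r⟩ | v
    · obtain ⟨q', hq', rfl⟩ := h3 a r hm
      exact ⟨Sum.inl (a, q'), hq', rfl⟩
    · exact ⟨Sum.inr v, (h1 v).mpr hm, rfl⟩
  · rintro ⟨m', hm', rfl⟩
    rcases m' with ⟨a, q'⟩ | v
    · obtain ⟨r', hr', hre⟩ := h2 a q' hm'
      have : gmap (A := A) (V := V) f (Sum.inl (a, q')) = Sum.inl (a, r') := by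
        simp [gmap, hre]
      rw [this]
      exact hr'
    · exact (h1 v).mp hm'

lemma distLift_gmap (f : Q → R) (d : R → R → ℝ) (m n : (A × Q) ⊕ V) :
    distLift (A := A) (V := V) d (gmap f m) (gmap f n)
      = distLift (fun a b => d (f a) (f b)) m n := by
  rcases m with ⟨a, x⟩ | v <;> rcases n with ⟨b, y⟩ | w <;> simp [gmap, distLift]

lemma Phi_comm (hf : IsHom β γ f) (d : R → R → ℝ) (x y : Q) :
    Phi γ d (f x) (f y) = Phi β (fun a b => d (f a) (f b)) x y := by
  classical
  have e1 : ∀ s t : Finset ((A × Q) ⊕ V),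
      dd (distLift d) (s.image (gmap f)) (t.image (gmap f))
        = dd (distLift fun a b => d (f a) (f b)) s t := by
    intro s t
    unfold dd
    rw [hSup_image]
    refine congrArg (hSup s) (funext fun m => ?_)
    rw [hInf_image]
    exact congrArg (hInf t) (funext fun n => distLift_gmap f d m n)
  rw [Phi_eq, Phi_eq, image_eq hf x, image_eq hf y]
  rw [e1 (β x) (β y), e1 (β y) (β x)]

lemma It0_comm (hf : IsHom β γ f) : ∀ (n : ℕ) (x y : Q),
    It0 γ n (f x) (f y) = It0 β n x y := by
  intro n
  induction n with
  | zero => exact fun x y => rfl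
  | succ n ih =>
    intro x y
    have hfun : (fun a b => It0 γ n (f a) (f b)) = It0 β n :=
      funext fun a => funext fun b => ih a b
    calc It0 γ (n + 1) (f x) (f y) = Phi γ (It0 γ n) (f x) (f y) := rfl
      _ = Phi β (fun a b => It0 γ n (f a) (f b)) x y := Phi_comm hf _ x y
      _ = Phi β (It0 β n) x y := by rw [hfun]
      _ = It0 β (n + 1) x y := rfl

lemma blim_comm (hf : IsHom β γ f) (x y : Q) : blim γ (f x) (f y) = blim β x y := by
  simp only [blim]
  exact iSup_congr fun n => It0_comm hf n x y

end HomIsoAux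

/-- Every prechart homomorphism is an isometry with respect to the
behavioural distances. -/
theorem hom_isometry {A V Q R : Type*}
    (β : Q → Finset ((A × Q) ⊕ V)) (γ : R → Finset ((A × R) ⊕ V))
    (f : Q → R) (hf : IsHom β γ f)
    (bdβ : Q → Q → ℝ) (bdγ : R → R → ℝ)
    (hβ : IsLfpDist β bdβ) (hγ : IsLfpDist γ bdγ) :
    ∀ x y : Q, bdγ (f x) (f y) = bdβ x y := by
  intro x y
  rw [HomIsoAux.eq_blim hβ, HomIsoAux.eq_blim hγ]
  exact HomIsoAux.blim_comm hf x y
end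

section
/- Let (X, β) be a locally finite prechart and x, y ∈ X. Then bd_β(x, y) = 0 if x ~ y; otherwise there is a largest natural number n such that x ~^(n) y, and bd_β(x, y) = 2^{-n}. -/
section Aux
variable {A V X Y : Type*}

lemma le_hSup' {s : Finset Y} {f : Y → ℝ} {a : Y} (ha : a ∈ s) : f a ≤ hSup s f := by
  rw [hSup, dif_pos ⟨a, ha⟩]
  exact Finset.le_sup' f ha

lemma hSup_le' {s : Finset Y} {f : Y → ℝ} {c : ℝ} (hc : 0 ≤ c)
    (h : ∀ a ∈ s, f a ≤ c) : hSup s f ≤ c := by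
  rw [hSup]; split
  · exact Finset.sup'_le _ _ h
  · exact hc

lemma hInf_le' {s : Finset Y} {f : Y → ℝ} {a : Y} (ha : a ∈ s) : hInf s f ≤ f a := by
  rw [hInf, dif_pos ⟨a, ha⟩]
  exact Finset.inf'_le f ha

lemma le_hInf' {s : Finset Y} {f : Y → ℝ} {c : ℝ} (hc : c ≤ 1)
    (h : ∀ a ∈ s, c ≤ f a) : c ≤ hInf s f := by
  rw [hInf]; split
  · exact Finset.le_inf' _ _ h
  · exact hc

lemma hInf_le_one' {s : Finset Y} {f : Y → ℝ} (h : ∀ a ∈ s, f a ≤ 1) : hInf s f ≤ 1 := by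
  rw [hInf]; split
  next hne => exact le_trans (Finset.inf'_le f hne.choose_spec) (h _ hne.choose_spec)
  next => exact le_refl 1

lemma hSup_nonneg' {s : Finset Y} {f : Y → ℝ} (h : ∀ a ∈ s, 0 ≤ f a) : 0 ≤ hSup s f := by
  rw [hSup]; split
  next hne => exact le_trans (h _ hne.choose_spec) (Finset.le_sup' f hne.choose_spec)
  next => exact le_refl 0

lemma distLift_nonneg {d : X → X → ℝ} (hd : ∀ x y, 0 ≤ d x y) :
    ∀ m n : (A × X) ⊕ V, 0 ≤ distLift d m n := by
  rintro (⟨a, x⟩ | v) (⟨b, y⟩ | w) <;> simp only [distLift] <;> try norm_num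
  · split
    · linarith [hd x y]
    · norm_num
  · split <;> norm_num

lemma distLift_le_one {d : X → X → ℝ} (hd : ∀ x y, d x y ≤ 1) :
    ∀ m n : (A × X) ⊕ V, distLift d m n ≤ 1 := by
  rintro (⟨a, x⟩ | v) (⟨b, y⟩ | w) <;> simp only [distLift] <;> try norm_num
  · split
    · linarith [hd x y]
    · norm_num
  · split <;> norm_num

variable {β : X → Finset ((A × X) ⊕ V)}

lemma strat_succ {n : ℕ} {x y : X} : Strat β (n+1) x y ↔
    (∀ v : V, Sum.inr v ∈ β x ↔ Sum.inr v ∈ β y) ∧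
    (∀ (a : A) (x' : X), Sum.inl (a, x') ∈ β x →
      ∃ y', Sum.inl (a, y') ∈ β y ∧ Strat β n x' y') ∧
    (∀ (a : A) (y' : X), Sum.inl (a, y') ∈ β y →
      ∃ x', Sum.inl (a, x') ∈ β x ∧ Strat β n x' y') := Iff.rfl

lemma strat_zero {x y : X} : Strat β 0 x y := trivial

end Aux
section Strat
variable {A V X : Type*} {β : X → Finset ((A × X) ⊕ V)}

lemma strat_of_succ : ∀ {n : ℕ} {x y : X}, Strat β (n+1) x y → Strat β n x y := by
  intro n
  induction n with
  | zero => exact fun _ => trivial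
  | succ n ih =>
    intro x y h
    obtain ⟨hv, h1, h2⟩ := strat_succ.mp h
    refine strat_succ.mpr ⟨hv, ?_, ?_⟩
    · intro a x' hx
      obtain ⟨y', hy, hs⟩ := h1 a x' hx
      exact ⟨y', hy, ih hs⟩
    · intro a y' hy
      obtain ⟨x', hx, hs⟩ := h2 a y' hy
      exact ⟨x', hx, ih hs⟩

lemma strat_anti {m n : ℕ} (h : m ≤ n) {x y : X} (hs : Strat β n x y) : Strat β m x y := by
  induction h with
  | refl => exact hs
  | step h ih => exact ih (strat_of_succ hs)

lemma strat_refl : ∀ (n : ℕ) (x : X), Strat β n x x := by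
  intro n
  induction n with
  | zero => exact fun _ => trivial
  | succ n ih =>
    intro x
    exact strat_succ.mpr ⟨fun _ => Iff.rfl,
      fun a x' hx => ⟨x', hx, ih x'⟩, fun a y' hy => ⟨y', hy, ih y'⟩⟩

lemma strat_symm : ∀ {n : ℕ} {x y : X}, Strat β n x y → Strat β n y x := by
  intro n
  induction n with
  | zero => exact fun _ => trivial
  | succ n ih =>
    intro x y h
    obtain ⟨hv, h1, h2⟩ := strat_succ.mp h
    refine strat_succ.mpr ⟨fun v => (hv v).symm, ?_, ?_⟩
    · intro a y' hy
      obtain ⟨x', hx, hs⟩ := h2 a y' hy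
      exact ⟨x', hx, ih hs⟩
    · intro a x' hx
      obtain ⟨y', hy, hs⟩ := h1 a x' hx
      exact ⟨y', hy, ih hs⟩

lemma strat_trans : ∀ {n : ℕ} {x y z : X}, Strat β n x y → Strat β n y z → Strat β n x z := by
  intro n
  induction n with
  | zero => exact fun _ _ => trivial
  | succ n ih =>
    intro x y z hxy hyz
    obtain ⟨hv, h1, h2⟩ := strat_succ.mp hxy
    obtain ⟨hv', h1', h2'⟩ := strat_succ.mp hyz
    refine strat_succ.mpr ⟨fun v => (hv v).trans (hv' v), ?_, ?_⟩
    · intro a x' hx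
      obtain ⟨y', hy, hs⟩ := h1 a x' hx
      obtain ⟨z', hz, hs'⟩ := h1' a y' hy
      exact ⟨z', hz, ih hs hs'⟩
    · intro a z' hz
      obtain ⟨y', hy, hs⟩ := h2' a z' hz
      obtain ⟨x', hx, hs'⟩ := h2 a y' hy
      exact ⟨x', hx, ih hs' hs⟩

lemma isBisim_strat {R : X → X → Prop} (hR : IsBisim β β R) :
    ∀ (n : ℕ) {x y : X}, R x y → Strat β n x y := by
  intro n
  induction n with
  | zero => exact fun _ => trivial
  | succ n ih =>
    intro x y hxy
    obtain ⟨hv, h1, h2⟩ := hR x y hxy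
    refine strat_succ.mpr ⟨hv, ?_, ?_⟩
    · intro a x' hx
      obtain ⟨y', hy, hr⟩ := h1 a x' hx
      exact ⟨y', hy, ih hr⟩
    · intro a y' hy
      obtain ⟨x', hx, hr⟩ := h2 a y' hy
      exact ⟨x', hx, ih hr⟩

lemma pigeonhole_finset {Y : Type*} {s : Finset Y} {P : ℕ → Y → Prop}
    (hanti : ∀ {m n : ℕ} {z : Y}, m ≤ n → P n z → P m z)
    (h : ∀ n, ∃ z ∈ s, P n z) : ∃ z ∈ s, ∀ n, P n z := by
  choose g hg1 hg2 using h
  obtain ⟨m, hm⟩ := Finite.exists_infinite_fiber (fun n => (⟨g n, hg1 n⟩ : {z // z ∈ s}))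
  have hset : {n : ℕ | (⟨g n, hg1 n⟩ : {z // z ∈ s}) = m}.Infinite := by
    rw [← Set.infinite_coe_iff]
    exact hm
  refine ⟨m.1, m.2, fun n => ?_⟩
  obtain ⟨k, hk, hnk⟩ := hset.exists_gt n
  have hk' : g k = m.1 := congrArg Subtype.val hk
  exact hk' ▸ hanti hnk.le (hg2 k)

lemma forall_strat_isBisim : IsBisim β β (fun x y => ∀ n, Strat β n x y) := by
  intro x y hxy
  refine ⟨fun v => (strat_succ.mp (hxy 1)).1 v, ?_, ?_⟩
  · intro a x' hx
    have key : ∀ n, ∃ z ∈ β y, ∃ y', z = Sum.inl (a, y') ∧ Strat β n x' y' := by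
      intro n
      obtain ⟨y', hy, hs⟩ := (strat_succ.mp (hxy (n+1))).2.1 a x' hx
      exact ⟨_, hy, y', rfl, hs⟩
    obtain ⟨z, hz, hP⟩ := pigeonhole_finset
      (fun {m n y'} hmn ⟨w, hw, hs⟩ => ⟨w, hw, strat_anti hmn hs⟩) key
    obtain ⟨y', rfl, -⟩ := hP 0
    refine ⟨y', hz, fun n => ?_⟩
    obtain ⟨y'', heq, hs⟩ := hP n
    obtain ⟨rfl⟩ : y'' = y' := by
      injection heq with h1; injection h1 with _ h2; exact h2.symm
    exact hs
  · intro a y' hy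
    have key : ∀ n, ∃ z ∈ β x, ∃ x', z = Sum.inl (a, x') ∧ Strat β n x' y' := by
      intro n
      obtain ⟨x', hx, hs⟩ := (strat_succ.mp (hxy (n+1))).2.2 a y' hy
      exact ⟨_, hx, x', rfl, hs⟩
    obtain ⟨z, hz, hP⟩ := pigeonhole_finset
      (fun {m n x'} hmn ⟨w, hw, hs⟩ => ⟨w, hw, strat_anti hmn hs⟩) key
    obtain ⟨x', rfl, -⟩ := hP 0
    refine ⟨x', hz, fun n => ?_⟩
    obtain ⟨x'', heq, hs⟩ := hP n
    obtain ⟨rfl⟩ : x'' = x' := by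
      injection heq with h1; injection h1 with _ h2; exact h2.symm
    exact hs

end Strat
section Dstar
variable {A V X : Type*}
open scoped Classical

open Classical in
noncomputable def dstar (β : X → Finset ((A × X) ⊕ V)) (x y : X) : ℝ :=
  if h : ∃ n, ¬ Strat β n x y then (1/2 : ℝ) ^ (Nat.find h - 1) else 0

variable {β : X → Finset ((A × X) ⊕ V)}

lemma find_pos {x y : X} (h : ∃ n, ¬ Strat β n x y) : 0 < Nat.find h := by
  rcases Nat.eq_zero_or_pos (Nat.find h) with h0 | h0
  · exact absurd (h0 ▸ Nat.find_spec h) (not_not_intro strat_zero)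
  · exact h0

lemma dstar_nonneg (x y : X) : 0 ≤ dstar β x y := by
  rw [dstar]; split
  · positivity
  · exact le_refl 0

lemma dstar_le_one (x y : X) : dstar β x y ≤ 1 := by
  rw [dstar]; split
  · exact pow_le_one₀ (by norm_num) (by norm_num)
  · exact zero_le_one

lemma dstar_le_of_strat {n : ℕ} {x y : X} (hs : Strat β n x y) :
    dstar β x y ≤ (1/2 : ℝ) ^ n := by
  rw [dstar]; split
  next h =>
    have hn : n < Nat.find h := by
      by_contra hc
      exact Nat.find_spec h (strat_anti (not_lt.mp hc) hs)
    exact pow_le_pow_of_le_one (by norm_num) (by norm_num) (by omega)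
  next => positivity

lemma dstar_ge_of_not_strat {n : ℕ} {x y : X} (hs : ¬ Strat β (n+1) x y) :
    (1/2 : ℝ) ^ n ≤ dstar β x y := by
  have h : ∃ m, ¬ Strat β m x y := ⟨n+1, hs⟩
  rw [dstar, dif_pos h]
  have : Nat.find h ≤ n + 1 := Nat.find_le hs
  exact pow_le_pow_of_le_one (by norm_num) (by norm_num) (by omega)

lemma dstar_eq_zero_of_forall {x y : X} (h : ∀ n, Strat β n x y) : dstar β x y = 0 := by
  rw [dstar, dif_neg (by push_neg; exact h)]

lemma dstar_symm (x y : X) : dstar β x y = dstar β y x := by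
  by_cases h : ∃ n, ¬ Strat β n x y
  · have h' : ∃ n, ¬ Strat β n y x := by
      obtain ⟨n, hn⟩ := h
      exact ⟨n, fun hc => hn (strat_symm hc)⟩
    rw [dstar, dstar, dif_pos h, dif_pos h']
    congr 2
    apply le_antisymm
    · exact Nat.find_le (fun hc => Nat.find_spec h' (strat_symm hc))
    · exact Nat.find_le (fun hc => Nat.find_spec h (strat_symm hc))
  · push_neg at h
    rw [dstar_eq_zero_of_forall h, dstar_eq_zero_of_forall (fun n => strat_symm (h n))]

lemma dstar_refl (x : X) : dstar β x x = 0 :=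
  dstar_eq_zero_of_forall (fun n => strat_refl n x)

lemma dstar_triangle (x y z : X) : dstar β x z ≤ dstar β x y + dstar β y z := by
  by_cases h : ∃ n, ¬ Strat β n x z
  · obtain ⟨M, hM⟩ : ∃ M, Nat.find h = M + 1 :=
      ⟨Nat.find h - 1, by have := find_pos h; omega⟩
    have hval : dstar β x z = (1/2 : ℝ) ^ M := by rw [dstar, dif_pos h, hM]; norm_num
    have hN : ¬ Strat β (M+1) x z := hM ▸ Nat.find_spec h
    have : ¬ Strat β (M+1) x y ∨ ¬ Strat β (M+1) y z := by
      by_contra hc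
      push_neg at hc
      exact hN (strat_trans hc.1 hc.2)
    rcases this with h1 | h1
    · have := dstar_ge_of_not_strat h1
      have := dstar_nonneg (β := β) y z
      linarith
    · have := dstar_ge_of_not_strat h1
      have := dstar_nonneg (β := β) x y
      linarith
  · push_neg at h
    rw [dstar_eq_zero_of_forall h]
    have := dstar_nonneg (β := β) x y
    have := dstar_nonneg (β := β) y z
    linarith

lemma dstar_isBPMet : IsBPMet (dstar β) :=
  ⟨dstar_nonneg, dstar_le_one, dstar_refl, dstar_symm, dstar_triangle⟩

end Dstar
section PhiBounds
variable {A V X : Type*} {β : X → Finset ((A × X) ⊕ V)}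

lemma phi_nonneg {d : X → X → ℝ} (hd : ∀ x y, 0 ≤ d x y) (x y : X) :
    0 ≤ Phi β d x y :=
  le_trans (hSup_nonneg' (fun m hm => le_hInf' (by norm_num)
    (fun m' _ => distLift_nonneg hd m m'))) (le_max_left _ _)

lemma phi_le_one {d : X → X → ℝ} (hd : ∀ x y, d x y ≤ 1) (x y : X) :
    Phi β d x y ≤ 1 := by
  refine max_le ?_ ?_ <;>
    exact hSup_le' zero_le_one (fun m _ => hInf_le_one' (fun m' _ => distLift_le_one hd _ _))

lemma phi_upper {d : X → X → ℝ} {n : ℕ}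
    (hind : ∀ x y, Strat β n x y → d x y ≤ (1/2 : ℝ) ^ n)
    {x y : X} (hs : Strat β (n+1) x y) : Phi β d x y ≤ (1/2 : ℝ) ^ (n+1) := by
  obtain ⟨hv, h1, h2⟩ := strat_succ.mp hs
  have hpow : (0:ℝ) ≤ (1/2 : ℝ) ^ (n+1) := by positivity
  refine max_le (hSup_le' hpow ?_) (hSup_le' hpow ?_)
  · rintro (⟨a, x'⟩ | v) hm
    · obtain ⟨y', hy', hs'⟩ := h1 a x' hm
      calc hInf (β y) _ ≤ distLift d (.inl (a, x')) (.inl (a, y')) := hInf_le' hy'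
        _ = (1/2) * d x' y' := by simp [distLift]
        _ ≤ (1/2) * (1/2 : ℝ) ^ n := by linarith [hind x' y' hs']
        _ = (1/2 : ℝ) ^ (n+1) := by ring
    · have hmem : Sum.inr v ∈ β y := (hv v).mp hm
      calc hInf (β y) _ ≤ distLift d (.inr v) (.inr v) := hInf_le' hmem
        _ = 0 := by simp [distLift]
        _ ≤ _ := hpow
  · rintro (⟨a, y'⟩ | v) hm
    · obtain ⟨x', hx', hs'⟩ := h2 a y' hm
      calc hInf (β x) _ ≤ distLift d (.inl (a, y')) (.inl (a, x')) := hInf_le' hx'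
        _ = (1/2) * d y' x' := by simp [distLift]
        _ ≤ (1/2) * (1/2 : ℝ) ^ n := by linarith [hind y' x' (strat_symm hs')]
        _ = (1/2 : ℝ) ^ (n+1) := by ring
    · have hmem : Sum.inr v ∈ β x := (hv v).mpr hm
      calc hInf (β x) _ ≤ distLift d (.inr v) (.inr v) := hInf_le' hmem
        _ = 0 := by simp [distLift]
        _ ≤ _ := hpow

lemma phi_lower {d : X → X → ℝ} {n : ℕ}
    (hind : ∀ x y, ¬ Strat β n x y → (1/2 : ℝ) ^ n ≤ (1/2) * d x y)
    {x y : X} (hs : ¬ Strat β (n+1) x y) : (1/2 : ℝ) ^ n ≤ Phi β d x y := by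
  have hpow1 : ((1/2 : ℝ) ^ n) ≤ 1 := pow_le_one₀ (by norm_num) (by norm_num)
  rw [strat_succ, not_and_or, not_and_or] at hs
  rcases hs with hs | hs | hs
  · push_neg at hs
    obtain ⟨v, hv⟩ := hs
    rcases hv with ⟨hmx, hmy⟩ | ⟨hmx, hmy⟩
    · refine le_trans ?_ (le_max_left _ _)
      refine le_trans ?_ (le_hSup' hmx)
      refine le_hInf' hpow1 ?_
      rintro (⟨b, y'⟩ | w) hm
      · exact le_trans hpow1 (by simp [distLift])
      · have : w ≠ v := fun h => hmy (h ▸ hm)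
        refine le_trans hpow1 (by simp [distLift, Ne.symm this])
    · refine le_trans ?_ (le_max_right _ _)
      refine le_trans ?_ (le_hSup' hmy)
      refine le_hInf' hpow1 ?_
      rintro (⟨b, x'⟩ | w) hm
      · exact le_trans hpow1 (by simp [distLift])
      · have : w ≠ v := fun h => hmx (h ▸ hm)
        refine le_trans hpow1 (by simp [distLift, Ne.symm this])
  · push_neg at hs
    obtain ⟨a, x', hmx, hx'⟩ := hs
    refine le_trans ?_ (le_max_left _ _)
    refine le_trans ?_ (le_hSup' hmx)
    refine le_hInf' hpow1 ?_
    rintro (⟨b, y'⟩ | w) hm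
    · by_cases hab : a = b
      · subst hab
        have hns : ¬ Strat β n x' y' := hx' y' hm
        calc (1/2 : ℝ) ^ n ≤ (1/2) * d x' y' := hind x' y' hns
          _ = distLift d (.inl (a, x')) (.inl (a, y')) := by simp [distLift]
      · exact le_trans hpow1 (by simp [distLift, hab])
    · exact le_trans hpow1 (by simp [distLift])
  · push_neg at hs
    obtain ⟨a, y', hmy, hy'⟩ := hs
    refine le_trans ?_ (le_max_right _ _)
    refine le_trans ?_ (le_hSup' hmy)
    refine le_hInf' hpow1 ?_
    rintro (⟨b, x'⟩ | w) hm
    · by_cases hab : a = b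
      · subst hab
        have hns : ¬ Strat β n y' x' := fun hc => hy' x' hm (strat_symm hc)
        calc (1/2 : ℝ) ^ n ≤ (1/2) * d y' x' := hind y' x' hns
          _ = distLift d (.inl (a, y')) (.inl (a, x')) := by simp [distLift]
      · exact le_trans hpow1 (by simp [distLift, hab])
    · exact le_trans hpow1 (by simp [distLift])

lemma fix_le {d : X → X → ℝ} (hd : IsBPMet d) (hfix : Phi β d = d) :
    ∀ (n : ℕ) (x y : X), Strat β n x y → d x y ≤ (1/2 : ℝ) ^ n := by
  intro n
  induction n with
  | zero => exact fun x y _ => by simpa using hd.le_one x y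
  | succ n ih =>
    intro x y hs
    calc d x y = Phi β d x y := by rw [hfix]
      _ ≤ (1/2 : ℝ) ^ (n+1) := phi_upper (fun x' y' => ih x' y') hs

lemma fix_ge {d : X → X → ℝ} (hd : IsBPMet d) (hfix : Phi β d = d) :
    ∀ (n : ℕ) (x y : X), ¬ Strat β (n+1) x y → (1/2 : ℝ) ^ n ≤ d x y := by
  intro n
  induction n with
  | zero =>
    intro x y hs
    calc (1/2 : ℝ) ^ 0 ≤ Phi β d x y :=
        phi_lower (fun x' y' hc => absurd strat_zero hc) hs
      _ = d x y := by rw [hfix]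
  | succ n ih =>
    intro x y hs
    have hind : ∀ x' y', ¬ Strat β (n+1) x' y' → (1/2 : ℝ) ^ (n+1) ≤ (1/2) * d x' y' := by
      intro x' y' hc
      have := ih x' y' hc
      calc (1/2 : ℝ) ^ (n+1) = (1/2) * (1/2 : ℝ) ^ n := by ring
        _ ≤ (1/2) * d x' y' := by linarith
    calc (1/2 : ℝ) ^ (n+1) ≤ Phi β d x y := phi_lower hind hs
      _ = d x y := by rw [hfix]

end PhiBounds
section Main
variable {A V X : Type*} {β : X → Finset ((A × X) ⊕ V)}
open scoped Classical

lemma phi_dstar : Phi β (dstar β) = dstar β := by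
  funext x y
  by_cases h : ∃ n, ¬ Strat β n x y
  · obtain ⟨M, hM⟩ : ∃ M, Nat.find h = M + 1 :=
      ⟨Nat.find h - 1, by have := find_pos h; omega⟩
    have hval : dstar β x y = (1/2 : ℝ) ^ M := by rw [dstar, dif_pos h, hM]; norm_num
    have hnS : ¬ Strat β (M+1) x y := hM ▸ Nat.find_spec h
    have hS : Strat β M x y := by
      by_contra hc
      have h2 : Nat.find h ≤ M := Nat.find_le hc
      omega
    rw [hval]
    apply le_antisymm
    · match M, hS with
      | 0, _ => simpa using phi_le_one dstar_le_one x y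
      | (K+1), hS => exact phi_upper (fun x' y' hs => dstar_le_of_strat hs) hS
    · refine phi_lower ?_ hnS
      intro x' y' hc
      match M, hc with
      | 0, hc => exact absurd strat_zero hc
      | (K+1), hc =>
        have := dstar_ge_of_not_strat hc
        calc (1/2 : ℝ) ^ (K+1) = (1/2) * (1/2 : ℝ) ^ K := by ring
          _ ≤ (1/2) * dstar β x' y' := by linarith
  · push_neg at h
    rw [dstar_eq_zero_of_forall h]
    apply le_antisymm
    · have hbis := forall_strat_isBisim (β := β) x y h
      obtain ⟨hv, h1, h2⟩ := hbis
      refine max_le (hSup_le' (le_refl 0) ?_) (hSup_le' (le_refl 0) ?_)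
      · rintro (⟨a, x'⟩ | v) hm
        · obtain ⟨y', hy', hs'⟩ := h1 a x' hm
          calc hInf (β y) _ ≤ distLift (dstar β) (.inl (a, x')) (.inl (a, y')) := hInf_le' hy'
            _ = (1/2) * dstar β x' y' := by simp [distLift]
            _ = 0 := by rw [dstar_eq_zero_of_forall hs']; ring
        · calc hInf (β y) _ ≤ distLift (dstar β) (.inr v) (.inr v) := hInf_le' ((hv v).mp hm)
            _ = 0 := by simp [distLift]
      · rintro (⟨a, y'⟩ | v) hm
        · obtain ⟨x', hx', hs'⟩ := h2 a y' hm
          calc hInf (β x) _ ≤ distLift (dstar β) (.inl (a, y')) (.inl (a, x')) := hInf_le' hx'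
            _ = (1/2) * dstar β y' x' := by simp [distLift]
            _ = 0 := by rw [dstar_eq_zero_of_forall (fun n => strat_symm (hs' n))]; ring
        · calc hInf (β x) _ ≤ distLift (dstar β) (.inr v) (.inr v) := hInf_le' ((hv v).mpr hm)
            _ = 0 := by simp [distLift]
    · exact phi_nonneg dstar_nonneg x y

end Main

open scoped Classical


/-- For a locally finite prechart, `bd_β(x,y) = 0` if `x ~ y`; otherwise
there is a largest `n` with `x ~^(n) y` and `bd_β(x,y) = 2^{-n}`. -/
theorem bd_eq_two_pow_neg_largest_strat {A V X : Type*}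
    (β : X → Finset ((A × X) ⊕ V)) (hlf : LocFinite β)
    (bd : X → X → ℝ) (hbd : IsLfpDist β bd) (x y : X) :
    (Bisimilar β x y → bd x y = 0) ∧
    (¬ Bisimilar β x y → ∃ n : ℕ, Strat β n x y ∧ (∀ m : ℕ, Strat β m x y → m ≤ n) ∧
      bd x y = (1 / 2 : ℝ) ^ n) := by
  obtain ⟨hbp, hfix, hleast⟩ := hbd
  have hle : ∀ x y, bd x y ≤ dstar β x y := hleast _ dstar_isBPMet phi_dstar
  constructor
  · intro hbis
    obtain ⟨R, hR, hxy⟩ := hbis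
    have hall : ∀ n, Strat β n x y := fun n => isBisim_strat hR n hxy
    have h1 := hle x y
    rw [dstar_eq_zero_of_forall hall] at h1
    exact le_antisymm h1 (hbp.nonneg x y)
  · intro hnb
    have h : ∃ n, ¬ Strat β n x y := by
      by_contra hc
      push_neg at hc
      exact hnb ⟨_, forall_strat_isBisim, hc⟩
    obtain ⟨M, hM⟩ : ∃ M, Nat.find h = M + 1 :=
      ⟨Nat.find h - 1, by have := find_pos h; omega⟩
    have hnS : ¬ Strat β (M+1) x y := hM ▸ Nat.find_spec h
    have hS : Strat β M x y := by
      by_contra hc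
      have h2 : Nat.find h ≤ M := Nat.find_le hc
      omega
    refine ⟨M, hS, ?_, ?_⟩
    · intro m hm
      by_contra hc
      exact hnS (strat_anti (by omega) hm)
    · have hub : bd x y ≤ (1/2 : ℝ) ^ M := by
        have := hle x y
        have hd : dstar β x y = (1/2 : ℝ) ^ M := by rw [dstar, dif_pos h, hM]; norm_num
        linarith [hd ▸ this]
      have hlb := fix_ge hbp hfix M x y hnS
      exact le_antisymm hub hlb
end

section
/- For any set X and any 1-bounded pseudometrics d, d' on X, the Hausdorff lifting is nonexpansive with respect to the sup norm: ‖H(d) − H(d')‖ ≤ ‖d − d'‖, where H(d) and H(d') are regarded as functions on pairs of finite subsets of X. -/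
lemma abs_inf'_sub_inf'_le {Y : Type*} {s : Finset Y} (h : s.Nonempty)
    {f g : Y → ℝ} {c : ℝ} (hc : ∀ x ∈ s, |f x - g x| ≤ c) :
    |s.inf' h f - s.inf' h g| ≤ c := by
  rw [abs_sub_le_iff]
  constructor
  · obtain ⟨x, hx, hxe⟩ := s.exists_mem_eq_inf' h g
    have hf := s.inf'_le (f := f) hx
    have := hc x hx
    rw [abs_sub_le_iff] at this
    rw [hxe]; linarith [this.1]
  · obtain ⟨x, hx, hxe⟩ := s.exists_mem_eq_inf' h f
    have hf := s.inf'_le (f := g) hx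
    have := hc x hx
    rw [abs_sub_le_iff] at this
    rw [hxe]; linarith [this.2]

lemma abs_sup'_sub_sup'_le {Y : Type*} {s : Finset Y} (h : s.Nonempty)
    {f g : Y → ℝ} {c : ℝ} (hc : ∀ x ∈ s, |f x - g x| ≤ c) :
    |s.sup' h f - s.sup' h g| ≤ c := by
  rw [abs_sub_le_iff]
  constructor
  · obtain ⟨x, hx, hxe⟩ := s.exists_mem_eq_sup' h f
    have hf := s.le_sup' g hx
    have := hc x hx
    rw [abs_sub_le_iff] at this
    rw [hxe]; linarith [this.1]
  · obtain ⟨x, hx, hxe⟩ := s.exists_mem_eq_sup' h g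
    have hf := s.le_sup' f hx
    have := hc x hx
    rw [abs_sub_le_iff] at this
    rw [hxe]; linarith [this.2]

lemma abs_hInf_sub_hInf_le {Y : Type*} {s : Finset Y}
    {f g : Y → ℝ} {c : ℝ} (hc0 : 0 ≤ c) (hc : ∀ x ∈ s, |f x - g x| ≤ c) :
    |hInf s f - hInf s g| ≤ c := by
  unfold hInf
  split
  · exact abs_inf'_sub_inf'_le _ hc
  · simpa using hc0

lemma abs_hSup_sub_hSup_le {Y : Type*} {s : Finset Y}
    {f g : Y → ℝ} {c : ℝ} (hc0 : 0 ≤ c) (hc : ∀ x ∈ s, |f x - g x| ≤ c) :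
    |hSup s f - hSup s g| ≤ c := by
  unfold hSup
  split
  · exact abs_sup'_sub_sup'_le _ hc
  · simpa using hc0

/-- The Hausdorff lifting is nonexpansive with respect to the sup norm. -/
theorem hausdorff_nonexpansive {X : Type*} (d d' : X → X → ℝ)
    (hd : IsBPMet d) (hd' : IsBPMet d') :
    (⨆ p : Finset X × Finset X, |hausdorffDist d p.1 p.2 - hausdorffDist d' p.1 p.2|) ≤
      ⨆ p : X × X, |d p.1 p.2 - d' p.1 p.2| := by
  set c := ⨆ p : X × X, |d p.1 p.2 - d' p.1 p.2| with hc
  have hbdd : BddAbove (Set.range fun p : X × X => |d p.1 p.2 - d' p.1 p.2|) := by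
    refine ⟨1, ?_⟩
    rintro _ ⟨p, rfl⟩
    have := hd.nonneg p.1 p.2
    have := hd.le_one p.1 p.2
    have := hd'.nonneg p.1 p.2
    have := hd'.le_one p.1 p.2
    rw [abs_sub_le_iff]; constructor <;> linarith
  have hc0 : 0 ≤ c := by
    rcases isEmpty_or_nonempty (X × X) with h | h
    · simp [hc, Real.iSup_of_isEmpty]
    · obtain ⟨p⟩ := h
      exact le_trans (abs_nonneg _) (le_ciSup hbdd p)
  have hpt : ∀ x y : X, |d x y - d' x y| ≤ c := fun x y => le_ciSup hbdd (x, y)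
  refine Real.iSup_le (fun p => ?_) hc0
  obtain ⟨s, t⟩ := p
  unfold hausdorffDist
  refine le_trans (abs_max_sub_max_le_max _ _ _ _) (max_le ?_ ?_)
  · exact abs_hSup_sub_hSup_le hc0 fun x _ =>
      abs_hInf_sub_hInf_le hc0 fun y _ => hpt x y
  · exact abs_hSup_sub_hSup_le hc0 fun y _ =>
      abs_hInf_sub_hInf_le hc0 fun x _ => hpt y x
end

section
/- For every prechart (Q, β), the map Φ_β is contractive with factor ½ with respect to the sup norm: for all 1-bounded pseudometrics d, d' on Q, ‖Φ_β(d) − Φ_β(d')‖ ≤ ½ ‖d − d'‖. -/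
lemma abs_hInf_sub_le {Y : Type*} {s : Finset Y} {f g : Y → ℝ} {ε : ℝ} (hε : 0 ≤ ε)
    (h : ∀ y ∈ s, |f y - g y| ≤ ε) : |hInf s f - hInf s g| ≤ ε := by
  unfold hInf
  by_cases hs : s.Nonempty
  · simp only [dif_pos hs]
    rw [abs_sub_le_iff]
    constructor
    · obtain ⟨y, hy, hyeq⟩ := s.exists_mem_eq_inf' hs g
      calc s.inf' hs f - s.inf' hs g ≤ f y - g y := by
            rw [hyeq]; exact sub_le_sub_right (Finset.inf'_le _ hy) _
        _ ≤ ε := (le_abs_self _).trans (h y hy)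
    · obtain ⟨y, hy, hyeq⟩ := s.exists_mem_eq_inf' hs f
      calc s.inf' hs g - s.inf' hs f ≤ g y - f y := by
            rw [hyeq]; exact sub_le_sub_right (Finset.inf'_le _ hy) _
        _ ≤ ε := by have := h y hy; rw [abs_sub_comm] at this
                    exact (le_abs_self _).trans this
  · simp [dif_neg hs, hε]

lemma abs_hSup_sub_le {Y : Type*} {s : Finset Y} {f g : Y → ℝ} {ε : ℝ} (hε : 0 ≤ ε)
    (h : ∀ y ∈ s, |f y - g y| ≤ ε) : |hSup s f - hSup s g| ≤ ε := by
  unfold hSup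
  by_cases hs : s.Nonempty
  · simp only [dif_pos hs]
    rw [abs_sub_le_iff]
    constructor
    · obtain ⟨y, hy, hyeq⟩ := s.exists_mem_eq_sup' hs f
      calc s.sup' hs f - s.sup' hs g ≤ f y - g y := by
            rw [hyeq]; exact sub_le_sub_left (Finset.le_sup' _ hy) _
        _ ≤ ε := (le_abs_self _).trans (h y hy)
    · obtain ⟨y, hy, hyeq⟩ := s.exists_mem_eq_sup' hs g
      calc s.sup' hs g - s.sup' hs f ≤ g y - f y := by
            rw [hyeq]; exact sub_le_sub_left (Finset.le_sup' _ hy) _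
        _ ≤ ε := by have := h y hy; rw [abs_sub_comm] at this
                    exact (le_abs_self _).trans this
  · simp [dif_neg hs, hε]

lemma abs_distLift_sub_le {A V X : Type*} {d d' : X → X → ℝ} {C : ℝ} (hC : 0 ≤ C)
    (h : ∀ x y, |d x y - d' x y| ≤ C) (m n : (A × X) ⊕ V) :
    |distLift d m n - distLift d' m n| ≤ (1 / 2) * C := by
  have h2 : (0:ℝ) ≤ (1/2) * C := by positivity
  match m, n with
  | Sum.inl (a, x), Sum.inl (b, y) =>
      by_cases hab : a = b
      · simp only [distLift, if_pos hab]
        rw [← mul_sub, abs_mul, abs_of_nonneg (by norm_num : (0:ℝ) ≤ 1/2)]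
        exact mul_le_mul_of_nonneg_left (h x y) (by norm_num)
      · simp [distLift, if_neg hab]; linarith
  | Sum.inl (a, x), Sum.inr w => simpa [distLift] using h2
  | Sum.inr v, Sum.inl (b, y) => simpa [distLift] using h2
  | Sum.inr v, Sum.inr w =>
      by_cases hvw : v = w <;> simp [distLift, hvw] <;> linarith

lemma abs_Phi_sub_le {A V Q : Type*} (β : Q → Finset ((A × Q) ⊕ V))
    {d d' : Q → Q → ℝ} {C : ℝ} (hC : 0 ≤ C) (h : ∀ x y, |d x y - d' x y| ≤ C)
    (q₁ q₂ : Q) : |Phi β d q₁ q₂ - Phi β d' q₁ q₂| ≤ (1 / 2) * C := by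
  have h2 : (0:ℝ) ≤ (1/2) * C := by positivity
  have key : ∀ m n, |distLift (A := A) (V := V) d m n - distLift d' m n| ≤ (1/2) * C :=
    abs_distLift_sub_le hC h
  unfold Phi hausdorffDist
  refine (abs_max_sub_max_le_max _ _ _ _).trans (max_le ?_ ?_)
  · exact abs_hSup_sub_le h2 fun x _ => abs_hInf_sub_le h2 fun y _ => key x y
  · exact abs_hSup_sub_le h2 fun x _ => abs_hInf_sub_le h2 fun y _ => key x y

/-- For every prechart `(Q, β)`, the map `Φ_β` is contractive with factor
`½` with respect to the sup norm. -/
theorem Phi_contractive {A V Q : Type*} (β : Q → Finset ((A × Q) ⊕ V))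
    (d d' : Q → Q → ℝ) (hd : IsBPMet d) (hd' : IsBPMet d') :
    (⨆ p : Q × Q, |Phi β d p.1 p.2 - Phi β d' p.1 p.2|) ≤
      (1 / 2) * ⨆ p : Q × Q, |d p.1 p.2 - d' p.1 p.2| := by
  by_cases hQ : Nonempty Q
  · set C : ℝ := ⨆ p : Q × Q, |d p.1 p.2 - d' p.1 p.2| with hCdef
    have hbdd : BddAbove (Set.range fun p : Q × Q => |d p.1 p.2 - d' p.1 p.2|) := by
      refine ⟨2, ?_⟩
      rintro x ⟨p, rfl⟩
      have := abs_sub_abs_le_abs_sub (d p.1 p.2) (d' p.1 p.2)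
      have h1 := hd.nonneg p.1 p.2
      have h2 := hd.le_one p.1 p.2
      have h3 := hd'.nonneg p.1 p.2
      have h4 := hd'.le_one p.1 p.2
      rw [abs_sub_le_iff]; constructor <;> linarith
    have hle : ∀ x y, |d x y - d' x y| ≤ C := fun x y =>
      le_ciSup hbdd (⟨x, y⟩ : Q × Q)
    have hC : 0 ≤ C := by
      obtain ⟨q⟩ := hQ
      exact (abs_nonneg _).trans (hle q q)
    haveI : Nonempty (Q × Q) := ⟨⟨Classical.choice hQ, Classical.choice hQ⟩⟩
    exact ciSup_le fun p => abs_Phi_sub_le β hC hle p.1 p.2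
  · have : IsEmpty (Q × Q) := by
      constructor; intro p; exact hQ ⟨p.1⟩
    rw [Real.iSup_of_isEmpty, Real.iSup_of_isEmpty]
    norm_num
end

section
/- Let (Q, β) be a finite prechart. For all states q₁, q₂ ∈ Q, the behavioural distance is the infimum of the iterates of Φ_β starting from the top element: bd_β(q₁, q₂) = inf_{p∈ℕ} Φ_β^{(p)}(q₁, q₂), where Φ_β^{(0)} = ⊤ is the discrete pseudometric and Φ_β^{(p+1)} = Φ_β(Φ_β^{(p)}). -/
lemma hInf_le_hInf' {Y : Type*} (t : Finset Y) (f g : Y → ℝ) (ε : ℝ) (hε : 0 ≤ ε)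
    (h : ∀ y ∈ t, f y ≤ g y + ε) : hInf t f ≤ hInf t g + ε := by
  unfold hInf
  split_ifs with ht
  · obtain ⟨y0, hy0, hval⟩ := Finset.exists_mem_eq_inf' ht g
    calc t.inf' ht f ≤ f y0 := Finset.inf'_le _ hy0
      _ ≤ g y0 + ε := h y0 hy0
      _ = _ := by rw [hval]
  · linarith

lemma hSup_le_hSup' {Y : Type*} (s : Finset Y) (f g : Y → ℝ) (ε : ℝ) (hε : 0 ≤ ε)
    (h : ∀ y ∈ s, f y ≤ g y + ε) : hSup s f ≤ hSup s g + ε := by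
  unfold hSup
  split_ifs with hs
  · obtain ⟨y0, hy0, hval⟩ := Finset.exists_mem_eq_sup' hs f
    rw [hval]
    calc f y0 ≤ g y0 + ε := h y0 hy0
      _ ≤ s.sup' hs g + ε := by
        have := Finset.le_sup' g hy0
        linarith
  · linarith

lemma distLift_le_distLift {A V X : Type*} (d d' : X → X → ℝ) (c : ℝ) (hc : 0 ≤ c)
    (h : ∀ x y, d x y ≤ d' x y + c) (m n : (A × X) ⊕ V) :
    distLift d m n ≤ distLift (V := V) d' m n + (1 / 2) * c := by
  rcases m with ⟨a, x⟩ | v <;> rcases n with ⟨b, y⟩ | w <;> simp only [distLift]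
  · split_ifs with hab
    · have := h x y; linarith
    · linarith
  · linarith
  · linarith
  · split_ifs with hvw <;> linarith

lemma Phi_le_Phi {A V Q : Type*} (β : Q → Finset ((A × Q) ⊕ V)) (d d' : Q → Q → ℝ)
    (c : ℝ) (hc : 0 ≤ c) (h : ∀ x y, d x y ≤ d' x y + c) (q₁ q₂ : Q) :
    Phi β d q₁ q₂ ≤ Phi β d' q₁ q₂ + (1 / 2) * c := by
  have hε : (0 : ℝ) ≤ (1 / 2) * c := by linarith
  have hd := distLift_le_distLift (A := A) (V := V) d d' c hc h
  have h1 : hSup (β q₁) (fun x => hInf (β q₂) fun y => distLift d x y)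
      ≤ hSup (β q₁) (fun x => hInf (β q₂) fun y => distLift d' x y) + (1 / 2) * c :=
    hSup_le_hSup' _ _ _ _ hε fun x _ =>
      hInf_le_hInf' _ _ _ _ hε fun y _ => hd x y
  have h2 : hSup (β q₂) (fun y => hInf (β q₁) fun x => distLift d y x)
      ≤ hSup (β q₂) (fun y => hInf (β q₁) fun x => distLift d' y x) + (1 / 2) * c :=
    hSup_le_hSup' _ _ _ _ hε fun x _ =>
      hInf_le_hInf' _ _ _ _ hε fun y _ => hd x y
  unfold Phi hausdorffDist
  exact max_le (h1.trans (add_le_add_left (le_max_left _ _) _))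
    (h2.trans (add_le_add_left (le_max_right _ _) _))

/-- For a finite prechart, the behavioural distance is the infimum of the
iterates of `Φ_β` starting from the discrete pseudometric. -/
theorem bd_eq_iInf_PhiIter_of_finite {A V Q : Type*} [Finite Q]
    (β : Q → Finset ((A × Q) ⊕ V)) (bd : Q → Q → ℝ) (hbd : IsLfpDist β bd)
    (q₁ q₂ : Q) :
    bd q₁ q₂ = ⨅ p : ℕ, PhiIter β p q₁ q₂ := by
  obtain ⟨hmet, hfix, _⟩ := hbd
  have hfix' : ∀ x y, Phi β bd x y = bd x y := fun x y => congrFun (congrFun hfix x) y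
  have hlo : ∀ p x y, bd x y ≤ PhiIter β p x y := by
    intro p
    induction p with
    | zero =>
      intro x y
      simp only [PhiIter, discreteDist]
      split_ifs with h
      · subst h; exact le_of_eq (hmet.refl x)
      · exact hmet.le_one x y
    | succ p ih =>
      intro x y
      have := Phi_le_Phi β bd (PhiIter β p) 0 le_rfl (fun x y => by simpa using ih x y) x y
      rw [hfix'] at this
      simpa [PhiIter] using this
  have hup : ∀ p x y, PhiIter β p x y ≤ bd x y + (1 / 2) ^ p := by
    intro p
    induction p with
    | zero =>
      intro x y
      have h0 := hmet.nonneg x y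
      simp only [PhiIter, discreteDist, pow_zero]
      split_ifs <;> linarith
    | succ p ih =>
      intro x y
      have := Phi_le_Phi β (PhiIter β p) bd ((1 / 2) ^ p) (by positivity) ih x y
      rw [hfix'] at this
      have hpow : ((1 : ℝ) / 2) ^ (p + 1) = (1 / 2) * (1 / 2) ^ p := by ring
      rw [hpow]
      simpa [PhiIter] using this
  apply le_antisymm
  · exact le_ciInf fun p => hlo p q₁ q₂
  · apply le_of_forall_pos_le_add
    intro ε hε
    obtain ⟨p, hp⟩ := exists_pow_lt_of_lt_one hε (by norm_num : (1 : ℝ) / 2 < 1)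
    have h1 : (⨅ p, PhiIter β p q₁ q₂) ≤ PhiIter β p q₁ q₂ :=
      ciInf_le ⟨bd q₁ q₂, by rintro x ⟨m, rfl⟩; exact hlo m q₁ q₂⟩ p
    have h2 := hup p q₁ q₂
    linarith
end

section
/- Let (X, β) be a locally finite prechart. For all states x, y ∈ X, bd_β(x, y) = inf_{i∈ℕ} Φ_β^{(i)}(x, y), where Φ_β^{(0)} = ⊤ is the discrete pseudometric and Φ_β^{(i+1)} = Φ_β(Φ_β^{(i)}). -/
theorem my_hInf_le_add {Y : Type*} (s : Finset Y) (f g : Y → ℝ) (c : ℝ) (hc : 0 ≤ c)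
    (h : ∀ y ∈ s, f y ≤ g y + c) : hInf s f ≤ hInf s g + c := by
  unfold hInf
  split_ifs with hs
  · obtain ⟨y, hy, hgy⟩ := Finset.exists_mem_eq_inf' hs g
    calc s.inf' hs f ≤ f y := Finset.inf'_le f hy
      _ ≤ g y + c := h y hy
      _ = s.inf' hs g + c := by rw [hgy]
  · linarith

theorem my_hSup_le_add {Y : Type*} (s : Finset Y) (f g : Y → ℝ) (c : ℝ) (hc : 0 ≤ c)
    (h : ∀ y ∈ s, f y ≤ g y + c) : hSup s f ≤ hSup s g + c := by
  unfold hSup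
  split_ifs with hs
  · obtain ⟨y, hy, hfy⟩ := Finset.exists_mem_eq_sup' hs f
    calc s.sup' hs f = f y := hfy
      _ ≤ g y + c := h y hy
      _ ≤ s.sup' hs g + c := by gcongr; exact Finset.le_sup' g hy
  · linarith

theorem my_distLift_le_add {A V X : Type*} (d d' : X → X → ℝ) (c : ℝ) (hc : 0 ≤ c)
    (h : ∀ a b, d a b ≤ d' a b + c) (u v : (A × X) ⊕ V) :
    distLift d u v ≤ distLift d' u v + c / 2 := by
  rcases u with ⟨a, x⟩ | v₁ <;> rcases v with ⟨b, y⟩ | v₂ <;>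
      simp only [distLift] <;> (try split_ifs) <;> try linarith
  have := h x y; linarith

theorem my_Phi_le_add {A V Q : Type*} (β : Q → Finset ((A × Q) ⊕ V)) (d d' : Q → Q → ℝ)
    (c : ℝ) (hc : 0 ≤ c) (h : ∀ a b, d a b ≤ d' a b + c) (x y : Q) :
    Phi β d x y ≤ Phi β d' x y + c / 2 := by
  have hc2 : (0:ℝ) ≤ c / 2 := by linarith
  unfold Phi hausdorffDist
  apply max_le
  · calc hSup (β x) (fun u => hInf (β y) fun v => distLift d u v)
        ≤ hSup (β x) (fun u => hInf (β y) fun v => distLift d' u v) + c / 2 := by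
          apply my_hSup_le_add _ _ _ _ hc2
          intro u _
          apply my_hInf_le_add _ _ _ _ hc2
          intro v _
          exact my_distLift_le_add d d' c hc h u v
      _ ≤ _ + c / 2 := by gcongr; exact le_max_left _ _
  · calc hSup (β y) (fun u => hInf (β x) fun v => distLift d u v)
        ≤ hSup (β y) (fun u => hInf (β x) fun v => distLift d' u v) + c / 2 := by
          apply my_hSup_le_add _ _ _ _ hc2
          intro u _
          apply my_hInf_le_add _ _ _ _ hc2
          intro v _
          exact my_distLift_le_add d d' c hc h u v
      _ ≤ _ + c / 2 := by gcongr; exact le_max_right _ _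

/-- For a locally finite prechart, the behavioural distance is the infimum
of the iterates of `Φ_β` starting from the discrete pseudometric. -/
theorem bd_eq_iInf_PhiIter_of_locFinite {A V X : Type*}
    (β : X → Finset ((A × X) ⊕ V)) (hlf : LocFinite β)
    (bd : X → X → ℝ) (hbd : IsLfpDist β bd) (x y : X) :
    bd x y = ⨅ i : ℕ, PhiIter β i x y := by
  obtain ⟨hbpm, hfix, -⟩ := hbd
  have lower : ∀ i x y, bd x y ≤ PhiIter β i x y := by
    intro i
    induction i with
    | zero =>
      intro x y
      simp only [PhiIter, discreteDist]
      split_ifs with hxy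
      · subst hxy; exact le_of_eq (hbpm.refl x)
      · exact hbpm.le_one x y
    | succ n ih =>
      intro x y
      have := my_Phi_le_add β bd (PhiIter β n) 0 le_rfl (by simpa using ih) x y
      calc bd x y = Phi β bd x y := by rw [hfix]
        _ ≤ Phi β (PhiIter β n) x y + 0 / 2 := this
        _ = PhiIter β (n+1) x y := by simp [PhiIter]
  have upper : ∀ i x y, PhiIter β i x y ≤ bd x y + (1/2 : ℝ) ^ i := by
    intro i
    induction i with
    | zero =>
      intro x y
      simp only [PhiIter, discreteDist, pow_zero]
      have h0 := hbpm.nonneg x y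
      split_ifs <;> linarith
    | succ n ih =>
      intro x y
      have := my_Phi_le_add β (PhiIter β n) bd ((1/2:ℝ)^n)
        (by positivity) ih x y
      calc PhiIter β (n+1) x y = Phi β (PhiIter β n) x y := rfl
        _ ≤ Phi β bd x y + (1/2:ℝ)^n / 2 := this
        _ = bd x y + (1/2:ℝ)^(n+1) := by rw [hfix]; ring
  have hbdd : BddBelow (Set.range fun i => PhiIter β i x y) := by
    refine ⟨bd x y, ?_⟩
    rintro _ ⟨i, rfl⟩
    exact lower i x y
  apply le_antisymm
  · exact le_ciInf fun i => lower i x y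
  · apply le_of_forall_pos_le_add
    intro ε hε
    obtain ⟨n, hn⟩ := exists_pow_lt_of_lt_one hε (by norm_num : (1/2:ℝ) < 1)
    calc (⨅ i : ℕ, PhiIter β i x y) ≤ PhiIter β n x y := ciInf_le hbdd n
      _ ≤ bd x y + (1/2:ℝ)^n := upper n x y
      _ ≤ bd x y + ε := by linarith
end

section
/- Let (X, β) be a locally finite prechart. For all x, y ∈ X and all i ∈ ℕ, either Φ_β^{(i)}(x, y) = 0 or there exists k ∈ ℕ such that Φ_β^{(i)}(x, y) = 2^{-k}, where Φ_β^{(0)} = ⊤ is the discrete pseudometric and Φ_β^{(i+1)} = Φ_β(Φ_β^{(i)}). -/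
private def PZ (r : ℝ) : Prop := r = 0 ∨ ∃ k : ℕ, r = (1 / 2 : ℝ) ^ k

private lemma PZ_zero : PZ 0 := Or.inl rfl
private lemma PZ_one : PZ 1 := Or.inr ⟨0, by norm_num⟩

private lemma PZ_distLift {A V X : Type*} {d : X → X → ℝ}
    (hd : ∀ x y, PZ (d x y)) (m n : (A × X) ⊕ V) : PZ (distLift d m n) := by
  rcases m with ⟨a, x⟩ | v <;> rcases n with ⟨b, y⟩ | w <;>
    simp only [distLift]
  · split_ifs with h
    · rcases hd x y with h0 | ⟨k, hk⟩
      · exact Or.inl (by rw [h0]; ring)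
      · exact Or.inr ⟨k + 1, by rw [hk]; ring⟩
    · exact PZ_one
  · exact PZ_one
  · exact PZ_one
  · split_ifs with h
    · exact PZ_zero
    · exact PZ_one

private lemma PZ_hSup {Y : Type*} {s : Finset Y} {f : Y → ℝ}
    (hf : ∀ z ∈ s, PZ (f z)) : PZ (hSup s f) := by
  unfold hSup
  split_ifs with h
  · obtain ⟨b, hb, he⟩ := Finset.exists_mem_eq_sup' h f
    rw [he]; exact hf b hb
  · exact PZ_zero

private lemma PZ_hInf {Y : Type*} {s : Finset Y} {f : Y → ℝ}
    (hf : ∀ z ∈ s, PZ (f z)) : PZ (hInf s f) := by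
  unfold hInf
  split_ifs with h
  · obtain ⟨b, hb, he⟩ := Finset.exists_mem_eq_inf' h f
    rw [he]; exact hf b hb
  · exact PZ_one

private lemma PZ_max {r t : ℝ} (hr : PZ r) (ht : PZ t) : PZ (max r t) := by
  rcases max_choice r t with h | h <;> rw [h] <;> assumption

/-- For a locally finite prechart, each approximant `Φ_β^{(i)}(x,y)` is
either `0` or a power `2^{-k}`. -/
theorem PhiIter_zero_or_two_pow {A V X : Type*}
    (β : X → Finset ((A × X) ⊕ V)) (hlf : LocFinite β) (x y : X) (i : ℕ) :
    PhiIter β i x y = 0 ∨ ∃ k : ℕ, PhiIter β i x y = (1 / 2 : ℝ) ^ k := by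
  suffices h : PZ (PhiIter β i x y) from h
  induction i generalizing x y with
  | zero =>
      simp only [PhiIter, discreteDist]
      split_ifs with h
      · exact PZ_zero
      · exact PZ_one
  | succ n ih =>
      show PZ (Phi β (PhiIter β n) x y)
      unfold Phi hausdorffDist
      exact PZ_max
        (PZ_hSup fun z _ => PZ_hInf fun w _ => PZ_distLift (fun a b => ih a b) z w)
        (PZ_hSup fun z _ => PZ_hInf fun w _ => PZ_distLift (fun a b => ih a b) z w)
end

section
/- Let (X, β) be a locally finite prechart and x, y ∈ X. If bd_β(x, y) > 0, then there exists i ∈ ℕ such that bd_β(x, y) = Φ_β^{(i)}(x, y), where Φ_β^{(0)} = ⊤ and Φ_β^{(i+1)} = Φ_β(Φ_β^{(i)}). -/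
section Aux

variable {A V X : Type*}

lemma hSup_le_add {Y : Type*} {s : Finset Y} {f g : Y → ℝ} {c : ℝ} (hc : 0 ≤ c)
    (h : ∀ x ∈ s, f x ≤ g x + c) : hSup s f ≤ hSup s g + c := by
  unfold hSup
  split_ifs with hs
  · exact Finset.sup'_le _ _ fun x hx =>
      le_trans (h x hx) (add_le_add_left (Finset.le_sup' g hx) c)
  · linarith

lemma hInf_le_add {Y : Type*} {s : Finset Y} {f g : Y → ℝ} {c : ℝ} (hc : 0 ≤ c)
    (h : ∀ x ∈ s, f x ≤ g x + c) : hInf s f ≤ hInf s g + c := by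
  unfold hInf
  split_ifs with hs
  · obtain ⟨x0, hx0, hEq⟩ := Finset.exists_mem_eq_inf' hs g
    calc s.inf' hs f ≤ f x0 := Finset.inf'_le f hx0
      _ ≤ g x0 + c := h x0 hx0
      _ = s.inf' hs g + c := by rw [hEq]
  · linarith

lemma distLift_le_add {d d' : X → X → ℝ} {c : ℝ} (hc : 0 ≤ c)
    (h : ∀ x y, d x y ≤ d' x y + c) (u v : (A × X) ⊕ V) :
    distLift d u v ≤ distLift d' u v + c / 2 := by
  rcases u with ⟨a, x⟩ | w
  · rcases v with ⟨b, y⟩ | w'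
    · simp only [distLift]
      split_ifs with hab
      · have := h x y; linarith
      · linarith
    · simp only [distLift]; linarith
  · rcases v with ⟨b, y⟩ | w'
    · simp only [distLift]; linarith
    · simp only [distLift]; split_ifs <;> linarith

lemma Phi_le_add {β : X → Finset ((A × X) ⊕ V)} {d d' : X → X → ℝ} {c : ℝ} (hc : 0 ≤ c)
    (h : ∀ x y, d x y ≤ d' x y + c) (x y : X) :
    Phi β d x y ≤ Phi β d' x y + c / 2 := by
  have hL := distLift_le_add (A := A) (V := V) hc h
  have hc2 : (0:ℝ) ≤ c / 2 := by linarith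
  unfold Phi hausdorffDist
  apply max_le
  · refine le_trans (hSup_le_add hc2 fun u _ => hInf_le_add hc2 fun v _ => hL u v) ?_
    exact add_le_add_left (le_max_left _ _) _
  · refine le_trans (hSup_le_add hc2 fun v _ => hInf_le_add hc2 fun u _ => hL v u) ?_
    exact add_le_add_left (le_max_right _ _) _

lemma hSup_cases {Y : Type*} (s : Finset Y) (f : Y → ℝ) :
    hSup s f = 0 ∨ ∃ x ∈ s, hSup s f = f x := by
  unfold hSup
  split_ifs with hs
  · exact Or.inr (Finset.exists_mem_eq_sup' hs f)
  · exact Or.inl rfl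

lemma hInf_cases {Y : Type*} (s : Finset Y) (f : Y → ℝ) :
    hInf s f = 1 ∨ ∃ x ∈ s, hInf s f = f x := by
  unfold hInf
  split_ifs with hs
  · exact Or.inr (Finset.exists_mem_eq_inf' hs f)
  · exact Or.inl rfl

lemma distLift_cases (d : X → X → ℝ) (u v : (A × X) ⊕ V) :
    distLift d u v = 0 ∨ distLift d u v = 1 ∨
      ∃ x' y', distLift d u v = (1 / 2) * d x' y' := by
  rcases u with ⟨a, x⟩ | w
  · rcases v with ⟨b, y⟩ | w'
    · simp only [distLift]
      split_ifs with hab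
      · exact Or.inr (Or.inr ⟨x, y, rfl⟩)
      · exact Or.inr (Or.inl rfl)
    · exact Or.inr (Or.inl rfl)
  · rcases v with ⟨b, y⟩ | w'
    · exact Or.inr (Or.inl rfl)
    · simp only [distLift]
      split_ifs with hww
      · exact Or.inl rfl
      · exact Or.inr (Or.inl rfl)

lemma Phi_cases (β : X → Finset ((A × X) ⊕ V)) (d : X → X → ℝ) (x y : X) :
    Phi β d x y = 0 ∨ Phi β d x y = 1 ∨
      ∃ x' y', Phi β d x y = (1 / 2) * d x' y' := by
  unfold Phi hausdorffDist
  rcases max_choice (hSup (β x) fun u => hInf (β y) fun v => distLift d u v)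
      (hSup (β y) fun v => hInf (β x) fun u => distLift d v u) with h | h <;> rw [h]
  · rcases hSup_cases (β x) (fun u => hInf (β y) fun v => distLift d u v) with h1 | ⟨u, _, h1⟩
    · exact Or.inl h1
    · rw [h1]
      rcases hInf_cases (β y) (fun v => distLift d u v) with h2 | ⟨v, _, h2⟩
      · exact Or.inr (Or.inl h2)
      · rw [h2]; exact distLift_cases d u v
  · rcases hSup_cases (β y) (fun v => hInf (β x) fun u => distLift d v u) with h1 | ⟨v, _, h1⟩
    · exact Or.inl h1
    · rw [h1]
      rcases hInf_cases (β x) (fun u => distLift d v u) with h2 | ⟨u, _, h2⟩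
      · exact Or.inr (Or.inl h2)
      · rw [h2]; exact distLift_cases d v u

lemma bd_dyadic {β : X → Finset ((A × X) ⊕ V)} {bd : X → X → ℝ}
    (hm : IsBPMet bd) (hfix : Phi β bd = bd) :
    ∀ n : ℕ, ∀ x y : X, ((1:ℝ) / 2) ^ n ≤ bd x y → ∃ k : ℕ, bd x y = (1 / 2) ^ k := by
  intro n
  induction n with
  | zero =>
    intro x y h
    refine ⟨0, le_antisymm (hm.le_one x y) ?_⟩
    simpa using h
  | succ n ih =>
    intro x y h
    rcases Phi_cases β bd x y with h0 | h1 | ⟨x', y', h2⟩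
    · rw [hfix] at h0
      exfalso
      have := pow_pos (by norm_num : (0:ℝ) < 1 / 2) (n + 1)
      linarith
    · rw [hfix] at h1
      exact ⟨0, by simpa using h1⟩
    · rw [hfix] at h2
      have h' : ((1:ℝ) / 2) ^ n ≤ bd x' y' := by
        rw [h2, pow_succ] at h
        linarith
      obtain ⟨k, hk⟩ := ih x' y' h'
      exact ⟨k + 1, by rw [h2, hk, pow_succ]; ring⟩

lemma bd_le_iter {β : X → Finset ((A × X) ⊕ V)} {bd : X → X → ℝ}
    (hm : IsBPMet bd) (hfix : Phi β bd = bd) :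
    ∀ i : ℕ, ∀ x y : X, bd x y ≤ PhiIter β i x y := by
  intro i
  induction i with
  | zero =>
    intro x y
    simp only [PhiIter, discreteDist]
    split_ifs with hxy
    · subst hxy; exact le_of_eq (hm.refl x)
    · exact hm.le_one x y
  | succ i ih =>
    intro x y
    have := Phi_le_add (β := β) (c := 0) le_rfl (fun x y => by simpa using ih x y) x y
    rw [hfix] at this
    simpa [PhiIter] using this

lemma iter_le_bd_add {β : X → Finset ((A × X) ⊕ V)} {bd : X → X → ℝ}
    (hm : IsBPMet bd) (hfix : Phi β bd = bd) :
    ∀ i : ℕ, ∀ x y : X, PhiIter β i x y ≤ bd x y + (1 / 2) ^ i := by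
  intro i
  induction i with
  | zero =>
    intro x y
    simp only [PhiIter, discreteDist, pow_zero]
    have := hm.nonneg x y
    split_ifs <;> linarith
  | succ i ih =>
    intro x y
    have hc : (0:ℝ) ≤ (1 / 2) ^ i := by positivity
    have := Phi_le_add (β := β) (c := (1 / 2) ^ i) hc ih x y
    rw [hfix] at this
    calc PhiIter β (i + 1) x y = Phi β (PhiIter β i) x y := rfl
      _ ≤ bd x y + (1 / 2) ^ i / 2 := this
      _ = bd x y + (1 / 2) ^ (i + 1) := by rw [pow_succ]; ring

lemma iter_dyadic (β : X → Finset ((A × X) ⊕ V)) :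
    ∀ i : ℕ, ∀ x y : X, PhiIter β i x y = 0 ∨
      ∃ j ≤ i, PhiIter β i x y = ((1:ℝ) / 2) ^ j := by
  intro i
  induction i with
  | zero =>
    intro x y
    simp only [PhiIter, discreteDist]
    split_ifs
    · exact Or.inl rfl
    · exact Or.inr ⟨0, le_rfl, by norm_num⟩
  | succ i ih =>
    intro x y
    rcases Phi_cases β (PhiIter β i) x y with h0 | h1 | ⟨x', y', h2⟩
    · exact Or.inl h0
    · exact Or.inr ⟨0, Nat.zero_le _, by rw [pow_zero]; exact h1⟩
    · rcases ih x' y' with hz | ⟨j, hj, hEq⟩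
      · refine Or.inl ?_
        show Phi β (PhiIter β i) x y = 0
        rw [h2, hz]; ring
      · refine Or.inr ⟨j + 1, Nat.succ_le_succ hj, ?_⟩
        show Phi β (PhiIter β i) x y = _
        rw [h2, hEq, pow_succ]; ring

end Aux

/-- For a locally finite prechart, if the behavioural distance of two
states is positive then it is attained by one of the approximants. -/
theorem bd_pos_attained {A V X : Type*}
    (β : X → Finset ((A × X) ⊕ V)) (hlf : LocFinite β)
    (bd : X → X → ℝ) (hbd : IsLfpDist β bd) (x y : X) (hpos : 0 < bd x y) :
    ∃ i : ℕ, bd x y = PhiIter β i x y := by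
  obtain ⟨hm, hfix, -⟩ := hbd
  -- bd x y is a dyadic power
  obtain ⟨n, hn⟩ := exists_pow_lt_of_lt_one hpos (by norm_num : (1:ℝ) / 2 < 1)
  obtain ⟨k, hk⟩ := bd_dyadic hm hfix n x y (le_of_lt hn)
  refine ⟨k + 1, ?_⟩
  have h1 : bd x y ≤ PhiIter β (k + 1) x y := bd_le_iter hm hfix (k + 1) x y
  have h2 : PhiIter β (k + 1) x y ≤ bd x y + (1 / 2) ^ (k + 1) :=
    iter_le_bd_add hm hfix (k + 1) x y
  rcases iter_dyadic β (k + 1) x y with h0 | ⟨j, hj, hEq⟩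
  · exfalso; rw [h0] at h1; linarith
  · rw [hEq, hk]
    rw [hk] at h1 h2
    rw [hEq] at h1 h2
    -- h1 : (1/2)^k ≤ (1/2)^j, h2 : (1/2)^j ≤ (1/2)^k + (1/2)^(k+1)
    have hjk : j = k := by
      by_contra hne
      have hle : j ≤ k := by
        by_contra hgt
        push_neg at hgt
        have : ((1:ℝ) / 2) ^ j < (1 / 2) ^ k :=
          pow_lt_pow_right_of_lt_one₀ (by norm_num) (by norm_num) hgt
        linarith
      have hlt : j + 1 ≤ k := lt_of_le_of_ne hle hne
      have h3 : ((1:ℝ) / 2) ^ k ≤ (1 / 2) ^ (j + 1) :=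
        pow_le_pow_of_le_one (by norm_num) (by norm_num) hlt
      have h4 : ((1:ℝ) / 2) ^ (j + 1) = (1 / 2) ^ j / 2 := by rw [pow_succ]; ring
      have h5 : (0:ℝ) < (1 / 2) ^ k := by positivity
      have h6 : ((1:ℝ) / 2) ^ (k + 1) = (1 / 2) ^ k / 2 := by rw [pow_succ]; ring
      -- (1/2)^j ≥ 2 * (1/2)^k  and (1/2)^j ≤ (3/2) * (1/2)^k
      nlinarith
    rw [hjk]
end
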